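/- (Davis–Kahan variant for singular subspaces.) Let Q ∈ ℝ^{N×d} (N ≥ d) be a rank-d matrix with nonzero singular values σ₁ > … > σ_d > 0 whose left singular vectors form the columns of U ∈ ℝ^{N×d}. Let Q̂ be any N×d matrix and let Û ∈ ℝ^{N×d} contain its left singular vectors. Then there exists a d×d orthogonal matrix Ô such that ‖Û·Ô − U‖_F ≤ (2√(2d)/σ_d²)·( 2σ₁ + ‖Q̂ − Q‖_op )·‖Q̂ − Q‖_op. -/

import Mathlib

/-!
Let `K = 1 - Û Ûᵀ` and `ε = ‖Q̂ - Q‖_op`. Since `K Q̂ = 0` and `Q Qᵀ U = U diag(s²)`, we get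
`K U diag(s²) = K (Q Qᵀ - Q̂ Q̂ᵀ) U`, hence
`σ_d² ‖K U‖_F ≤ √d ‖Q̂ Q̂ᵀ - Q Qᵀ‖_op ≤ √d (2σ₁ + ε) ε`.
For the orthogonal factor `Ô` of a singular value decomposition of `M = Ûᵀ U`,
`tr(Ôᵀ M)` is the sum of the singular values of `M`, which lie in `[0, 1]`, so it dominates
`tr(Mᵀ M) = d - ‖K U‖_F²`; this gives `‖Û Ô - U‖_F² = 2d - 2 tr(Ôᵀ M) ≤ 2 ‖K U‖_F²`.
-/

open Matrix

namespace Stmt12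

/-- Reinterpret a plain vector `Fin n → ℝ` as an element of `EuclideanSpace ℝ (Fin n)`,
so that `‖·‖` denotes the Euclidean (ℓ²) norm. -/
def toEuc {n : ℕ} (v : Fin n → ℝ) : EuclideanSpace ℝ (Fin n) := WithLp.toLp 2 v

/-- The ℓ²→ℓ² operator (spectral) norm of a real matrix. -/
noncomputable def opNorm {m n : ℕ} (A : Matrix (Fin m) (Fin n) ℝ) : ℝ :=
  sSup {y : ℝ | ∃ x : EuclideanSpace ℝ (Fin n), ‖x‖ ≤ 1 ∧ y = ‖toEuc (A.mulVec x)‖}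

/-- The Frobenius norm of a real matrix. -/
noncomputable def frobNorm {m n : ℕ} (A : Matrix (Fin m) (Fin n) ℝ) : ℝ :=
  Real.sqrt (∑ i, ∑ j, (A i j) ^ 2)

open scoped Matrix.Norms.L2Operator

theorem opNorm_eq_l2_opNorm {m n : ℕ} (A : Matrix (Fin m) (Fin n) ℝ) : opNorm A = ‖A‖ := by
  rw [l2_opNorm_def, ← ContinuousLinearMap.sSup_unitClosedBall_eq_norm, opNorm]
  congr 1
  ext y
  simp [toEuc, eq_comm, Matrix.toLpLin_apply]

section OperatorNorm

variable {m n p : Type*} [Fintype m] [Fintype n] [Fintype p] [DecidableEq n]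

theorem l2_opNorm_transpose [DecidableEq m] (A : Matrix m n ℝ) : ‖Aᵀ‖ = ‖A‖ := by
  rw [← conjTranspose_eq_transpose_of_trivial, l2_opNorm_conjTranspose]

theorem l2_opNorm_one_le : ‖(1 : Matrix n n ℝ)‖ ≤ 1 := by
  rw [← diagonal_one, l2_opNorm_diagonal]
  exact pi_norm_le_iff_of_nonneg zero_le_one |>.mpr fun _ => by simp

theorem l2_opNorm_le_one_of_transpose_mul_self {U : Matrix m n ℝ}
    (hU : Uᵀ * U = 1) : ‖U‖ ≤ 1 := by
  have h := l2_opNorm_conjTranspose_mul_self U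
  rw [conjTranspose_eq_transpose_of_trivial, hU] at h
  nlinarith [l2_opNorm_one_le (n := n), norm_nonneg U]

theorem l2_opNorm_mul_diagonal_mul_transpose [DecidableEq m] [DecidableEq p]
    {U : Matrix m n ℝ} {W : Matrix p n ℝ} (hU : Uᵀ * U = 1) (hW : Wᵀ * W = 1) (s : n → ℝ) :
    ‖U * diagonal s * Wᵀ‖ = ‖s‖ := by
  have hU1 := l2_opNorm_le_one_of_transpose_mul_self hU
  have hW1 := l2_opNorm_le_one_of_transpose_mul_self hW
  apply le_antisymm
  · calc ‖U * diagonal s * Wᵀ‖ ≤ ‖U‖ * ‖diagonal s‖ * ‖Wᵀ‖ :=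
          (l2_opNorm_mul _ _).trans (by gcongr; exact l2_opNorm_mul _ _)
      _ ≤ 1 * ‖s‖ * 1 := by rw [l2_opNorm_diagonal, l2_opNorm_transpose]; gcongr
      _ = ‖s‖ := by ring
  · have hD : Uᵀ * (U * diagonal s * Wᵀ) * W = diagonal s := by
      simp only [Matrix.mul_assoc, hW, Matrix.mul_one, ← Matrix.mul_assoc Uᵀ U, hU, Matrix.one_mul]
    calc ‖s‖ = ‖Uᵀ * (U * diagonal s * Wᵀ) * W‖ := by rw [hD, l2_opNorm_diagonal]
      _ ≤ ‖Uᵀ‖ * ‖U * diagonal s * Wᵀ‖ * ‖W‖ :=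
          (l2_opNorm_mul _ _).trans (by gcongr; exact l2_opNorm_mul _ _)
      _ ≤ 1 * ‖U * diagonal s * Wᵀ‖ * 1 := by rw [l2_opNorm_transpose]; gcongr
      _ = ‖U * diagonal s * Wᵀ‖ := by ring

theorem l2_opNorm_mul_transpose_sub_le [DecidableEq m] (A B : Matrix m n ℝ) :
    ‖A * Aᵀ - B * Bᵀ‖ ≤ (2 * ‖B‖ + ‖A - B‖) * ‖A - B‖ := by
  have hsplit : A * Aᵀ - B * Bᵀ = (A - B) * Aᵀ + B * (A - B)ᵀ := by
    rw [transpose_sub, Matrix.sub_mul, Matrix.mul_sub]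
    abel
  have hA : ‖A‖ ≤ ‖B‖ + ‖A - B‖ := by simpa using norm_add_le B (A - B)
  calc ‖A * Aᵀ - B * Bᵀ‖ ≤ ‖A - B‖ * ‖Aᵀ‖ + ‖B‖ * ‖(A - B)ᵀ‖ := by
        rw [hsplit]
        exact (norm_add_le _ _).trans (add_le_add (l2_opNorm_mul _ _) (l2_opNorm_mul _ _))
    _ = ‖A - B‖ * ‖A‖ + ‖B‖ * ‖A - B‖ := by rw [l2_opNorm_transpose, l2_opNorm_transpose]
    _ ≤ ‖A - B‖ * (‖B‖ + ‖A - B‖) + ‖B‖ * ‖A - B‖ := by gcongr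
    _ = (2 * ‖B‖ + ‖A - B‖) * ‖A - B‖ := by ring

theorem l2_opNorm_one_sub_mul_transpose_le [DecidableEq m] {U : Matrix m n ℝ}
    (hU : Uᵀ * U = 1) : ‖1 - U * Uᵀ‖ ≤ 1 := by
  set K := 1 - U * Uᵀ
  have hKt : Kᵀ = K := by simp [K, transpose_sub]
  have hKK : K * K = K := by
    simp only [K, Matrix.sub_mul, Matrix.mul_sub, Matrix.one_mul, Matrix.mul_one,
      Matrix.mul_assoc, ← Matrix.mul_assoc Uᵀ U, hU]
    abel
  have h := l2_opNorm_conjTranspose_mul_self K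
  rw [conjTranspose_eq_transpose_of_trivial, hKt, hKK] at h
  nlinarith [norm_nonneg K]

theorem exists_orthogonal_mul_diagonal_sqrt_eq {P : Matrix n n ℝ} {μ : n → ℝ}
    (hP : Pᵀ * P = diagonal μ) :
    ∃ B : Matrix n n ℝ, Bᵀ * B = 1 ∧ P = B * diagonal (fun i => √(μ i)) := by
  let p : n → EuclideanSpace ℝ n := fun i => WithLp.toLp 2 (fun k => P k i)
  have hp : ∀ i j, inner ℝ (p i) (p j) = if i = j then μ i else 0 := fun i j => by
    have := congr_fun (congr_fun hP i) j
    simp only [mul_apply, transpose_apply, diagonal_apply] at this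
    simp [p, PiLp.inner_apply, ← this, mul_comm]
  have hμ : ∀ i, 0 ≤ μ i := fun i => by
    have := real_inner_self_nonneg (x := p i)
    rwa [hp, if_pos rfl] at this
  let a : n → EuclideanSpace ℝ n := fun i => (√(μ i))⁻¹ • p i
  have ha : Orthonormal ℝ ({i | μ i ≠ 0}.domRestrict a) := by
    rw [orthonormal_iff_ite]
    rintro ⟨i, hi⟩ ⟨j, hj⟩
    simp only [Set.domRestrict_apply, a, real_inner_smul_left, real_inner_smul_right, hp,
      Subtype.mk.injEq]
    split_ifs with hij
    · subst hij
      have : √(μ i) ≠ 0 := by simpa [Real.sqrt_eq_zero (hμ i)] using hi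
      field_simp
      rw [Real.sq_sqrt (hμ i)]
    · simp
  obtain ⟨b, hb⟩ := ha.exists_orthonormalBasis_extension_of_card_eq (by simp)
  refine ⟨(EuclideanSpace.basisFun n ℝ).toBasis.toMatrix b, ?_, ?_⟩
  · simpa using (EuclideanSpace.basisFun n ℝ).toMatrix_orthonormalBasis_conjTranspose_mul_self b
  · ext k i
    rw [mul_diagonal, Module.Basis.toMatrix_apply]
    by_cases hi : μ i = 0
    · have : p i = 0 := by simpa [hi] using hp i i
      simpa [hi] using congr_arg (fun v : EuclideanSpace ℝ n => v k) this
    · have : √(μ i) ≠ 0 := by simpa [Real.sqrt_eq_zero (hμ i)] using hi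
      simp [hb i hi, a, p, mul_right_comm _ (P k i), this]

theorem exists_svd (M : Matrix n n ℝ) :
    ∃ (B V : Matrix n n ℝ) (σ : n → ℝ), Bᵀ * B = 1 ∧ Vᵀ * V = 1 ∧ (∀ i, 0 ≤ σ i) ∧
      M = B * diagonal σ * Vᵀ := by
  have hH : (Mᵀ * M).IsHermitian := by
    simpa using isHermitian_conjTranspose_mul_self M
  set V : Matrix n n ℝ := (hH.eigenvectorUnitary : Matrix n n ℝ)
  have hVV : V * Vᵀ = 1 := by
    have := Unitary.coe_mul_star_self hH.eigenvectorUnitary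
    rwa [Unitary.coe_star, star_eq_conjTranspose, conjTranspose_eq_transpose_of_trivial] at this
  have hdiag : (M * V)ᵀ * (M * V) = diagonal hH.eigenvalues := by
    have := hH.conjStarAlgAut_star_eigenvectorUnitary
    simp only [Unitary.conjStarAlgAut_apply, Unitary.coe_star, star_eq_conjTranspose,
      conjTranspose_eq_transpose_of_trivial] at this
    simpa [V, Matrix.mul_assoc] using this
  obtain ⟨B, hB, hMV⟩ := exists_orthogonal_mul_diagonal_sqrt_eq hdiag
  refine ⟨B, V, fun i => √(hH.eigenvalues i), hB, mul_eq_one_comm.mp hVV,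
    fun i => Real.sqrt_nonneg _, ?_⟩
  rw [← hMV, Matrix.mul_assoc, hVV, Matrix.mul_one]

theorem exists_orthogonal_trace_transpose_mul_self_le {M : Matrix n n ℝ} (hM : ‖M‖ ≤ 1) :
    ∃ O : Matrix n n ℝ, Oᵀ * O = 1 ∧ trace (Mᵀ * M) ≤ trace (Oᵀ * M) := by
  obtain ⟨B, V, σ, hB, hV, hσ, rfl⟩ := exists_svd M
  have hVt : V * Vᵀ = 1 := mul_eq_one_comm.mp hV
  have hσ_le : ∀ i, σ i ≤ 1 := fun i => by
    calc σ i ≤ ‖σ‖ := (Real.le_norm_self _).trans (norm_le_pi_norm σ i)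
      _ = ‖B * diagonal σ * Vᵀ‖ := (l2_opNorm_mul_diagonal_mul_transpose hB hV σ).symm
      _ ≤ 1 := hM
  refine ⟨B * Vᵀ, ?_, ?_⟩
  · simp only [transpose_mul, transpose_transpose, Matrix.mul_assoc, ← Matrix.mul_assoc Bᵀ B, hB,
      Matrix.one_mul, hVt]
  · have hMM : trace ((B * diagonal σ * Vᵀ)ᵀ * (B * diagonal σ * Vᵀ)) = ∑ i, σ i ^ 2 := by
      simp only [transpose_mul, transpose_transpose, diagonal_transpose, Matrix.mul_assoc,
        ← Matrix.mul_assoc Bᵀ B, hB, Matrix.one_mul]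
      rw [trace_mul_comm, Matrix.mul_assoc, Matrix.mul_assoc, hV, Matrix.mul_one,
        diagonal_mul_diagonal, trace_diagonal]
      simp only [sq]
    have hOM : trace ((B * Vᵀ)ᵀ * (B * diagonal σ * Vᵀ)) = ∑ i, σ i := by
      simp only [transpose_mul, transpose_transpose, Matrix.mul_assoc,
        ← Matrix.mul_assoc Bᵀ B, hB, Matrix.one_mul]
      rw [trace_mul_comm, Matrix.mul_assoc, hV, Matrix.mul_one, trace_diagonal]
    rw [hMM, hOM]
    exact Finset.sum_le_sum fun i _ => by nlinarith [hσ i, hσ_le i]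

end OperatorNorm

section Frobenius

variable {m n p : ℕ}

theorem frobNorm_nonneg (A : Matrix (Fin m) (Fin n) ℝ) : 0 ≤ frobNorm A :=
  Real.sqrt_nonneg _

theorem frobNorm_sq (A : Matrix (Fin m) (Fin n) ℝ) :
    frobNorm A ^ 2 = trace (Aᵀ * A) := by
  rw [frobNorm, Real.sq_sqrt (by positivity), trace, Finset.sum_comm]
  simp [mul_apply, sq]

theorem frobNorm_sub_sq (X Y : Matrix (Fin m) (Fin n) ℝ) :
    frobNorm (X - Y) ^ 2 = frobNorm X ^ 2 + frobNorm Y ^ 2 - 2 * trace (Xᵀ * Y) := by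
  have hYX : trace (Yᵀ * X) = trace (Xᵀ * Y) := by
    rw [← trace_transpose, transpose_mul, transpose_transpose]
  simp only [frobNorm_sq, transpose_sub, Matrix.sub_mul, Matrix.mul_sub, trace_sub, hYX]
  ring

theorem frobNorm_sq_of_transpose_mul_self {U : Matrix (Fin m) (Fin n) ℝ}
    (hU : Uᵀ * U = 1) : frobNorm U ^ 2 = n := by
  simp [frobNorm_sq, hU]

theorem frobNorm_mul_le (A : Matrix (Fin m) (Fin n) ℝ)
    (B : Matrix (Fin n) (Fin p) ℝ) : frobNorm (A * B) ≤ ‖A‖ * frobNorm B := by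
  have hcol : ∀ j, ∑ i, (A * B) i j ^ 2 ≤ ‖A‖ ^ 2 * ∑ k, B k j ^ 2 := fun j => by
    have h := A.l2_opNorm_mulVec (WithLp.toLp 2 fun k => B k j)
    have h2 := pow_le_pow_left₀ (norm_nonneg _) h 2
    rw [mul_pow, EuclideanSpace.norm_sq_eq, EuclideanSpace.norm_sq_eq] at h2
    simpa [mul_apply, mulVec, dotProduct] using h2
  rw [frobNorm, frobNorm, ← Real.sqrt_sq (norm_nonneg A), ← Real.sqrt_mul (sq_nonneg _)]
  gcongr
  calc ∑ i, ∑ j, (A * B) i j ^ 2 = ∑ j, ∑ i, (A * B) i j ^ 2 := Finset.sum_comm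
    _ ≤ ∑ j, ‖A‖ ^ 2 * ∑ k, B k j ^ 2 := Finset.sum_le_sum fun j _ => hcol j
    _ = ‖A‖ ^ 2 * ∑ k, ∑ j, B k j ^ 2 := by rw [← Finset.mul_sum, Finset.sum_comm]

theorem mul_frobNorm_le_frobNorm_mul_diagonal (A : Matrix (Fin m) (Fin n) ℝ)
    {t : Fin n → ℝ} {c : ℝ} (hc : 0 ≤ c) (ht : ∀ j, c ≤ |t j|) :
    c * frobNorm A ≤ frobNorm (A * diagonal t) := by
  rw [frobNorm, frobNorm, ← Real.sqrt_sq hc, ← Real.sqrt_mul (sq_nonneg _), Finset.mul_sum]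
  gcongr with i _
  rw [Finset.mul_sum]
  gcongr with j _
  rw [mul_diagonal, mul_pow, mul_comm, ← sq_abs (t j)]
  gcongr
  exact ht j

end Frobenius

theorem exists_orthogonal_frobNorm_mul_sub_le {N d : ℕ} {U Uhat : Matrix (Fin N) (Fin d) ℝ}
    (hU : Uᵀ * U = 1) (hUhat : Uhatᵀ * Uhat = 1) :
    ∃ O : Matrix (Fin d) (Fin d) ℝ, Oᵀ * O = 1 ∧
      frobNorm (Uhat * O - U) ≤ √2 * frobNorm ((1 - Uhat * Uhatᵀ) * U) := by
  set M := Uhatᵀ * U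
  have hM : ‖M‖ ≤ 1 := by
    calc ‖M‖ ≤ ‖Uhatᵀ‖ * ‖U‖ := l2_opNorm_mul _ _
      _ ≤ 1 * 1 := by
        rw [l2_opNorm_transpose]
        gcongr
        exacts [l2_opNorm_le_one_of_transpose_mul_self hUhat,
          l2_opNorm_le_one_of_transpose_mul_self hU]
      _ = 1 := one_mul 1
  obtain ⟨O, hO, htr⟩ := exists_orthogonal_trace_transpose_mul_self_le hM
  refine ⟨O, hO, ?_⟩
  have hUhatO : (Uhat * O)ᵀ * (Uhat * O) = 1 := by
    rw [transpose_mul, Matrix.mul_assoc, ← Matrix.mul_assoc Uhatᵀ, hUhat, Matrix.one_mul, hO]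
  have hUhatM : frobNorm (Uhat * M) ^ 2 = trace (Mᵀ * M) := by
    rw [frobNorm_sq, transpose_mul, Matrix.mul_assoc, ← Matrix.mul_assoc Uhatᵀ, hUhat,
      Matrix.one_mul]
  have hfit : frobNorm (Uhat * O - U) ^ 2 = 2 * d - 2 * trace (Oᵀ * M) := by
    rw [frobNorm_sub_sq, frobNorm_sq_of_transpose_mul_self hUhatO,
      frobNorm_sq_of_transpose_mul_self hU, transpose_mul, Matrix.mul_assoc]
    ring
  have hperp : frobNorm ((1 - Uhat * Uhatᵀ) * U) ^ 2 = d - trace (Mᵀ * M) := by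
    have hKU : (1 - Uhat * Uhatᵀ) * U = U - Uhat * M := by
      rw [Matrix.sub_mul, Matrix.one_mul, Matrix.mul_assoc]
    have hUtUhat : Uᵀ * Uhat = Mᵀ := by rw [transpose_mul, transpose_transpose]
    rw [hKU, frobNorm_sub_sq, frobNorm_sq_of_transpose_mul_self hU, hUhatM,
      ← Matrix.mul_assoc Uᵀ Uhat M, hUtUhat]
    ring
  refine (pow_le_pow_iff_left₀ (frobNorm_nonneg _)
    (mul_nonneg (Real.sqrt_nonneg 2) (frobNorm_nonneg _)) two_ne_zero).mp ?_
  rw [mul_pow, Real.sq_sqrt zero_le_two, hfit, hperp]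
  linarith

theorem sq_mul_frobNorm_one_sub_mul_transpose_mul_le {N d k : ℕ}
    {U Uhat : Matrix (Fin N) (Fin d) ℝ} {Q Qhat : Matrix (Fin N) (Fin k) ℝ}
    {W : Matrix (Fin k) (Fin d) ℝ} {X : Matrix (Fin d) (Fin k) ℝ} {s : Fin d → ℝ} {σ : ℝ}
    (hU : Uᵀ * U = 1) (hW : Wᵀ * W = 1) (hQ : Q = U * diagonal s * Wᵀ)
    (hUhat : Uhatᵀ * Uhat = 1) (hQhat : Qhat = Uhat * X) (hσ0 : 0 ≤ σ) (hσ : ∀ i, σ ≤ |s i|) :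
    σ ^ 2 * frobNorm ((1 - Uhat * Uhatᵀ) * U) ≤ √d * ‖Qhat * Qhatᵀ - Q * Qᵀ‖ := by
  set K : Matrix (Fin N) (Fin N) ℝ := 1 - Uhat * Uhatᵀ
  have hKQhat : K * Qhat = 0 := by
    rw [hQhat, ← Matrix.mul_assoc, Matrix.sub_mul, Matrix.one_mul, Matrix.mul_assoc, hUhat,
      Matrix.mul_one, sub_self, Matrix.zero_mul]
  have hKnorm : ‖K‖ ≤ 1 := l2_opNorm_one_sub_mul_transpose_le hUhat
  clear_value K
  have hQQU : Q * Qᵀ * U = U * diagonal (fun i => s i ^ 2) := by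
    simp only [hQ, transpose_mul, transpose_transpose, diagonal_transpose, Matrix.mul_assoc,
      ← Matrix.mul_assoc Wᵀ W, hW, hU, Matrix.one_mul, Matrix.mul_one, diagonal_mul_diagonal, sq]
  have hKU : K * U * diagonal (fun i => s i ^ 2) = K * (Q * Qᵀ - Qhat * Qhatᵀ) * U := by
    rw [Matrix.mul_sub, Matrix.sub_mul, ← Matrix.mul_assoc K Qhat, hKQhat, Matrix.zero_mul,
      Matrix.zero_mul, sub_zero, Matrix.mul_assoc K (Q * Qᵀ), hQQU, Matrix.mul_assoc]
  have hfrobU : frobNorm U = √d := by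
    rw [← frobNorm_sq_of_transpose_mul_self hU, Real.sqrt_sq (frobNorm_nonneg U)]
  calc σ ^ 2 * frobNorm (K * U) ≤ frobNorm (K * U * diagonal (fun i => s i ^ 2)) :=
        mul_frobNorm_le_frobNorm_mul_diagonal _ (sq_nonneg σ) fun i => by
          rw [abs_of_nonneg (sq_nonneg _), ← sq_abs (s i)]
          gcongr
          exact hσ i
    _ ≤ ‖K * (Q * Qᵀ - Qhat * Qhatᵀ)‖ * frobNorm U := by rw [hKU]; exact frobNorm_mul_le _ _
    _ ≤ 1 * ‖Qhat * Qhatᵀ - Q * Qᵀ‖ * √d := by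
        rw [hfrobU, ← norm_sub_rev (Q * Qᵀ)]
        gcongr
        exact (l2_opNorm_mul _ _).trans (by gcongr)
    _ = √d * ‖Qhat * Qhatᵀ - Q * Qᵀ‖ := by ring

theorem stmt_12_general {N d : ℕ}
    (Q Qhat U Uhat : Matrix (Fin N) (Fin d) ℝ)
    (s : Fin d → ℝ) (W : Matrix (Fin d) (Fin d) ℝ)
    (hs_pos : ∀ i, 0 < s i)
    (hU : Uᵀ * U = 1) (hW : Wᵀ * W = 1)
    (hSVD : Q = U * Matrix.diagonal s * Wᵀ)
    (shat : Fin d → ℝ) (What : Matrix (Fin d) (Fin d) ℝ)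
    (hUhat : Uhatᵀ * Uhat = 1)
    (hSVDhat : Qhat = Uhat * Matrix.diagonal shat * Whatᵀ)
    (σ₁ σd : ℝ) (hσ₁ : IsGreatest (Set.range s) σ₁) (hσd : IsLeast (Set.range s) σd) :
    ∃ O : Matrix (Fin d) (Fin d) ℝ, Oᵀ * O = 1 ∧
      frobNorm (Uhat * O - U) ≤
        (2 * Real.sqrt (2 * d) / σd ^ 2) * (2 * σ₁ + opNorm (Qhat - Q)) *
          opNorm (Qhat - Q) := by
  obtain ⟨i₀, hi₀⟩ := hσd.1
  have hσd_pos : 0 < σd := hi₀ ▸ hs_pos i₀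
  have hσ₁_nonneg : 0 ≤ σ₁ := (hs_pos i₀).le.trans (hσ₁.2 ⟨i₀, rfl⟩)
  have hs_norm : ‖s‖ ≤ σ₁ := (pi_norm_le_iff_of_nonneg hσ₁_nonneg).mpr
    fun i => (Real.norm_of_nonneg (hs_pos i).le).trans_le (hσ₁.2 ⟨i, rfl⟩)
  rw [opNorm_eq_l2_opNorm]
  set ε := ‖Qhat - Q‖
  have hQ : ‖Q‖ ≤ σ₁ := hSVD ▸ (l2_opNorm_mul_diagonal_mul_transpose hU hW s).trans_le hs_norm
  have hE : ‖Qhat * Qhatᵀ - Q * Qᵀ‖ ≤ (2 * σ₁ + ε) * ε :=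
    (l2_opNorm_mul_transpose_sub_le _ _).trans (by gcongr)
  have hperp : frobNorm ((1 - Uhat * Uhatᵀ) * U) ≤ √d * ((2 * σ₁ + ε) * ε) / σd ^ 2 := by
    rw [le_div_iff₀ (by positivity), mul_comm]
    refine (sq_mul_frobNorm_one_sub_mul_transpose_mul_le hU hW hSVD hUhat
      (hSVDhat.trans (Matrix.mul_assoc _ _ _)) hσd_pos.le
      fun i => (hσd.2 ⟨i, rfl⟩).trans (le_abs_self _)).trans ?_
    gcongr
  obtain ⟨O, hO, hfit⟩ := exists_orthogonal_frobNorm_mul_sub_le hU hUhat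
  refine ⟨O, hO, ?_⟩
  have hbound_nonneg : 0 ≤ √2 * (√d * ((2 * σ₁ + ε) * ε) / σd ^ 2) := by positivity
  calc frobNorm (Uhat * O - U) ≤ √2 * frobNorm ((1 - Uhat * Uhatᵀ) * U) := hfit
    _ ≤ √2 * (√d * ((2 * σ₁ + ε) * ε) / σd ^ 2) := by gcongr
    _ ≤ 2 * (√2 * (√d * ((2 * σ₁ + ε) * ε) / σd ^ 2)) := by linarith
    _ = 2 * √(2 * d) / σd ^ 2 * (2 * σ₁ + ε) * ε := by rw [Real.sqrt_mul zero_le_two]; ring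

/-- **Theorem (Davis–Kahan variant of Yu, Wang and Samworth, for singular subspaces).**
Let `Q ∈ ℝ^{N×d}` (`N ≥ d`) be a rank-`d` matrix with singular value decomposition
`Q = U (diag s) Wᵀ`, where `s 0 > s 1 > … > s (d−1) > 0`, and let `σ₁` (resp. `σ_d`)
be the largest (resp. smallest) of these singular values.  Let `Q̂` be any `N×d`
matrix with singular value decomposition `Q̂ = Û (diag ŝ) Ŵᵀ` (so the columns of `Û`
are the left singular vectors of `Q̂`, ordered by decreasing singular value).  Then
there exists a `d×d` orthogonal matrix `Ô` with
`‖Û Ô − U‖_F ≤ (2√(2d)/σ_d²) (2σ₁ + ‖Q̂ − Q‖_op) ‖Q̂ − Q‖_op`. -/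
theorem stmt_12 {N d : ℕ} (hNd : d ≤ N)
    (Q Qhat U Uhat : Matrix (Fin N) (Fin d) ℝ)
    (s : Fin d → ℝ) (W : Matrix (Fin d) (Fin d) ℝ)
    (hs_anti : StrictAnti s) (hs_pos : ∀ i, 0 < s i)
    (hU : Uᵀ * U = 1) (hW : Wᵀ * W = 1)
    (hSVD : Q = U * Matrix.diagonal s * Wᵀ)
    (shat : Fin d → ℝ) (What : Matrix (Fin d) (Fin d) ℝ)
    (hshat_anti : Antitone shat) (hshat_nonneg : ∀ i, 0 ≤ shat i)
    (hUhat : Uhatᵀ * Uhat = 1) (hWhat : Whatᵀ * What = 1)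
    (hSVDhat : Qhat = Uhat * Matrix.diagonal shat * Whatᵀ)
    (σ₁ σd : ℝ) (hσ₁ : IsGreatest (Set.range s) σ₁) (hσd : IsLeast (Set.range s) σd) :
    ∃ O : Matrix (Fin d) (Fin d) ℝ, Oᵀ * O = 1 ∧
      frobNorm (Uhat * O - U) ≤
        (2 * Real.sqrt (2 * d) / σd ^ 2) * (2 * σ₁ + opNorm (Qhat - Q)) *
          opNorm (Qhat - Q) :=
  stmt_12_general Q Qhat U Uhat s W hs_pos hU hW hSVD shat What hUhat hSVDhat σ₁ σd hσ₁ hσd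

end Stmt12
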